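/- Let G be a simple graph containing no induced diamond and no induced 2P_1 + P_3 (two isolated vertices plus a path on three vertices). Let C be a clique and I an independent set of G with C ∩ I = ∅. Then there exists a set S ⊆ C ∪ I with |S| ≤ 4 such that every edge of G with one endpoint in C and the other in I is incident to at least one vertex of S. -/

import Mathlib

/-- `G` contains an induced copy of `H`. -/
def HasInducedCopy {α β : Type*} (H : SimpleGraph α) (G : SimpleGraph β) : Prop :=
  ∃ f : α ↪ β, ∀ a b : α, G.Adj (f a) (f b) ↔ H.Adj a b

/-- The diamond: `K₄` minus the edge `{0,1}`. -/
def diamond : SimpleGraph (Fin 4) :=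
  SimpleGraph.fromRel (fun a b => ¬(a = 0 ∧ b = 1) ∧ ¬(a = 1 ∧ b = 0))

/-- `2P₁ + P₃`: two isolated vertices and the path `2-3-4`. -/
def twoP1PlusP3 : SimpleGraph (Fin 5) :=
  SimpleGraph.fromRel (fun a b => (a = 2 ∧ b = 3) ∨ (a = 3 ∧ b = 4))

/-- If `a b c d` are pairwise distinct, with `a,b` non-adjacent and all other pairs
adjacent, then `G` contains an induced diamond. -/
lemma diamond_of {V : Type*} {G : SimpleGraph V} {a b c d : V}
    (hab : a ≠ b) (hac : a ≠ c) (had : a ≠ d) (hbc : b ≠ c) (hbd : b ≠ d) (hcd : c ≠ d)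
    (nab : ¬ G.Adj a b) (eac : G.Adj a c) (ead : G.Adj a d) (ebc : G.Adj b c)
    (ebd : G.Adj b d) (ecd : G.Adj c d) : HasInducedCopy diamond G := by
  refine ⟨⟨![a,b,c,d], ?_⟩, ?_⟩
  · intro i j h
    fin_cases i <;> fin_cases j <;> simp_all
  · intro i j
    show G.Adj (![a,b,c,d] i) (![a,b,c,d] j) ↔ _
    have nba : ¬ G.Adj b a := fun h => nab h.symm
    fin_cases i <;> fin_cases j <;>
      simp_all [diamond, G.adj_comm c a, G.adj_comm d a, G.adj_comm c b, G.adj_comm d b,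
        G.adj_comm d c]

/-- If `a b c d e` are pairwise distinct, the only adjacencies among them being
`c-d` and `d-e`, then `G` contains an induced `2P₁+P₃`. -/
lemma twoP1PlusP3_of {V : Type*} {G : SimpleGraph V} {a b c d e : V}
    (hab : a ≠ b) (hac : a ≠ c) (had : a ≠ d) (hae : a ≠ e)
    (hbc : b ≠ c) (hbd : b ≠ d) (hbe : b ≠ e) (hcd : c ≠ d) (hce : c ≠ e) (hde : d ≠ e)
    (nab : ¬ G.Adj a b) (nac : ¬ G.Adj a c) (nad : ¬ G.Adj a d) (nae : ¬ G.Adj a e)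
    (nbc : ¬ G.Adj b c) (nbd : ¬ G.Adj b d) (nbe : ¬ G.Adj b e)
    (ecd : G.Adj c d) (nce : ¬ G.Adj c e) (ede : G.Adj d e) :
    HasInducedCopy twoP1PlusP3 G := by
  refine ⟨⟨![a,b,c,d,e], ?_⟩, ?_⟩
  · intro i j h
    fin_cases i <;> fin_cases j <;> simp_all
  · intro i j
    show G.Adj (![a,b,c,d,e] i) (![a,b,c,d,e] j) ↔ _
    have nba : ¬ G.Adj b a := fun h => nab h.symm
    have nca : ¬ G.Adj c a := fun h => nac h.symm
    have nda : ¬ G.Adj d a := fun h => nad h.symm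
    have nea : ¬ G.Adj e a := fun h => nae h.symm
    have ncb : ¬ G.Adj c b := fun h => nbc h.symm
    have ndb : ¬ G.Adj d b := fun h => nbd h.symm
    have neb : ¬ G.Adj e b := fun h => nbe h.symm
    have nec : ¬ G.Adj e c := fun h => nce h.symm
    have edc : G.Adj d c := ecd.symm
    have eed : G.Adj e d := ede.symm
    fin_cases i <;> fin_cases j <;> simp_all [twoP1PlusP3]

theorem stmt5 {V : Type*} [Fintype V] (G : SimpleGraph V)
    (hdiamond : ¬ HasInducedCopy diamond G)
    (h2p1p3 : ¬ HasInducedCopy twoP1PlusP3 G)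
    (C I : Set V) (hC : G.IsClique C)
    (hI : ∀ a ∈ I, ∀ b ∈ I, a ≠ b → ¬ G.Adj a b)
    (hdisj : Disjoint C I) :
    ∃ S : Finset V, ↑S ⊆ C ∪ I ∧ S.card ≤ 4 ∧
      ∀ u ∈ C, ∀ w ∈ I, G.Adj u w → u ∈ S ∨ w ∈ S := by
  classical
  have hCI : ∀ x ∈ C, ∀ y ∈ I, x ≠ y := fun x hx y hy hxy =>
    (Set.disjoint_left.mp hdisj hx) (hxy ▸ hy)
  by_cases hC2 : ∃ u ∈ C, ∃ v ∈ C, u ≠ v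
  swap
  · -- C has at most one element
    push_neg at hC2
    by_cases hCe : ∃ c, c ∈ C
    · obtain ⟨c, hc⟩ := hCe
      refine ⟨{c}, ?_, by simp, ?_⟩
      · simp [Set.singleton_subset_iff, hc]
      · intro u hu w _ _
        exact Or.inl (by simp [hC2 u hu c hc])
    · push_neg at hCe
      exact ⟨∅, by simp, by simp, fun u hu => absurd hu (hCe u)⟩
  obtain ⟨u₀, hu₀, v₀, hv₀, huv₀⟩ := hC2
  -- "bad" vertices of I: those with at least two neighbours in C
  set B : Set V := {w | w ∈ I ∧ ∃ u ∈ C, ∃ v ∈ C, u ≠ v ∧ G.Adj w u ∧ G.Adj w v} with hB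
  -- a bad vertex is adjacent to every vertex of C
  have key : ∀ w ∈ B, ∀ x ∈ C, G.Adj w x := by
    rintro w ⟨hwI, u, hu, v, hv, huv, hwu, hwv⟩ x hx
    by_cases hxu : x = u; · exact hxu ▸ hwu
    by_cases hxv : x = v; · exact hxv ▸ hwv
    by_contra hnwx
    refine hdiamond (diamond_of (a := w) (b := x) (c := u) (d := v)
      (Ne.symm (hCI x hx w hwI)) (Ne.symm (hCI u hu w hwI)) (Ne.symm (hCI v hv w hwI))
      hxu hxv huv hnwx hwu hwv (hC hx hu hxu) (hC hx hv hxv) (hC hu hv huv))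
  -- there is at most one bad vertex
  have hBsub : ∀ w₁ ∈ B, ∀ w₂ ∈ B, w₁ = w₂ := by
    intro w₁ hw₁ w₂ hw₂
    by_contra hne
    have h1 : w₁ ∈ I := hw₁.1
    have h2 : w₂ ∈ I := hw₂.1
    refine hdiamond (diamond_of (a := w₁) (b := w₂) (c := u₀) (d := v₀)
      hne (Ne.symm (hCI u₀ hu₀ w₁ h1)) (Ne.symm (hCI v₀ hv₀ w₁ h1))
      (Ne.symm (hCI u₀ hu₀ w₂ h2)) (Ne.symm (hCI v₀ hv₀ w₂ h2)) huv₀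
      (hI w₁ h1 w₂ h2 hne) (key w₁ hw₁ u₀ hu₀) (key w₁ hw₁ v₀ hv₀)
      (key w₂ hw₂ u₀ hu₀) (key w₂ hw₂ v₀ hv₀) (hC hu₀ hv₀ huv₀))
  -- good vertices of I (not bad) have at most one neighbour in C
  have hgood : ∀ w ∈ I, w ∉ B → ∀ u ∈ C, ∀ v ∈ C, G.Adj w u → G.Adj w v → u = v := by
    intro w hwI hwB u hu v hv hwu hwv
    by_contra hne
    exact hwB ⟨hwI, u, hu, v, hv, hne, hwu, hwv⟩
  -- clique vertices having a good neighbour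
  set D : Set V := {c | c ∈ C ∧ ∃ w ∈ I, w ∉ B ∧ G.Adj c w} with hD
  -- D has at most 3 elements: otherwise 2P1+P3
  have hD4 : ¬ ∃ c₁ ∈ D, ∃ c₂ ∈ D, ∃ c₃ ∈ D, ∃ c₄ ∈ D,
      c₁ ≠ c₂ ∧ c₁ ≠ c₃ ∧ c₁ ≠ c₄ ∧ c₂ ≠ c₃ ∧ c₂ ≠ c₄ ∧ c₃ ≠ c₄ := by
    rintro ⟨c₁, ⟨hc₁, w₁, hw₁I, hw₁B, e₁⟩, c₂, ⟨hc₂, w₂, hw₂I, hw₂B, e₂⟩,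
      c₃, ⟨hc₃, w₃, hw₃I, hw₃B, e₃⟩, c₄, ⟨hc₄, w₄, hw₄I, hw₄B, e₄⟩,
      h12, h13, h14, h23, h24, h34⟩
    -- each wᵢ is adjacent only to cᵢ within C
    have huniq : ∀ w ∈ I, w ∉ B → ∀ c ∈ C, G.Adj c w → ∀ c' ∈ C, c' ≠ c → ¬ G.Adj w c' := by
      intro w hwI hwB c hc hcw c' hc' hne hadj
      exact hne (hgood w hwI hwB c' hc' c hc hadj hcw.symm)
    -- the wᵢ's are pairwise distinct
    have hwne : ∀ i j : V, i ∈ C → j ∈ C → i ≠ j →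
        ∀ w ∈ I, w ∉ B → G.Adj i w → G.Adj j w → False := by
      intro i j hi hj hij w hwI hwB hiw hjw
      exact hij (hgood w hwI hwB i hi j hj hiw.symm hjw.symm)
    have h1ne3 : w₁ ≠ w₃ := fun h =>
      hwne c₁ c₃ hc₁ hc₃ h13 w₁ hw₁I hw₁B e₁ (h ▸ e₃)
    have h1ne4 : w₁ ≠ w₄ := fun h =>
      hwne c₁ c₄ hc₁ hc₄ h14 w₁ hw₁I hw₁B e₁ (h ▸ e₄)
    have h3ne4 : w₃ ≠ w₄ := fun h =>
      hwne c₃ c₄ hc₃ hc₄ h34 w₃ hw₃I hw₃B e₃ (h ▸ e₄)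
    -- build 2P1 + P3 on (w₃, w₄, w₁, c₁, c₂)
    refine h2p1p3 (twoP1PlusP3_of (a := w₃) (b := w₄) (c := w₁) (d := c₁) (e := c₂)
      h3ne4 h1ne3.symm (Ne.symm (hCI c₁ hc₁ w₃ hw₃I)) (Ne.symm (hCI c₂ hc₂ w₃ hw₃I))
      h1ne4.symm (Ne.symm (hCI c₁ hc₁ w₄ hw₄I)) (Ne.symm (hCI c₂ hc₂ w₄ hw₄I))
      (Ne.symm (hCI c₁ hc₁ w₁ hw₁I)) (Ne.symm (hCI c₂ hc₂ w₁ hw₁I)) h12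
      (hI w₃ hw₃I w₄ hw₄I h3ne4)
      (hI w₃ hw₃I w₁ hw₁I h1ne3.symm)
      (huniq w₃ hw₃I hw₃B c₃ hc₃ e₃ c₁ hc₁ h13)
      (huniq w₃ hw₃I hw₃B c₃ hc₃ e₃ c₂ hc₂ h23)
      (hI w₄ hw₄I w₁ hw₁I h1ne4.symm)
      (huniq w₄ hw₄I hw₄B c₄ hc₄ e₄ c₁ hc₁ h14)
      (huniq w₄ hw₄I hw₄B c₄ hc₄ e₄ c₂ hc₂ h24)
      e₁.symm
      (huniq w₁ hw₁I hw₁B c₁ hc₁ e₁ c₂ hc₂ h12.symm)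
      (hC hc₁ hc₂ h12))
  -- D as a finset
  have hDfin : D.Finite := Set.toFinite D
  set DF : Finset V := hDfin.toFinset with hDF
  have hDF3 : DF.card ≤ 3 := by
    by_contra h
    push_neg at h
    obtain ⟨T, hTsub, hT4⟩ := Finset.exists_subset_card_eq (by omega : 4 ≤ DF.card)
    obtain ⟨c₁, hc₁T⟩ := Finset.card_pos.mp (by omega : 0 < T.card)
    have h3 : (T.erase c₁).card = 3 := by
      rw [Finset.card_erase_of_mem hc₁T, hT4]
    obtain ⟨c₂, c₃, c₄, h23, h24, h34, hTe⟩ := Finset.card_eq_three.mp h3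
    have hc₂ : c₂ ∈ T.erase c₁ := by rw [hTe]; simp
    have hc₃ : c₃ ∈ T.erase c₁ := by rw [hTe]; simp
    have hc₄ : c₄ ∈ T.erase c₁ := by rw [hTe]; simp
    have memD : ∀ x ∈ T, x ∈ D := fun x hx => hDfin.mem_toFinset.mp (hTsub hx)
    exact hD4 ⟨c₁, memD c₁ hc₁T, c₂, memD c₂ (Finset.mem_of_mem_erase hc₂),
      c₃, memD c₃ (Finset.mem_of_mem_erase hc₃), c₄, memD c₄ (Finset.mem_of_mem_erase hc₄),
      (Finset.ne_of_mem_erase hc₂).symm, (Finset.ne_of_mem_erase hc₃).symm,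
      (Finset.ne_of_mem_erase hc₄).symm, h23, h24, h34⟩
  have hDFC : ∀ x ∈ DF, x ∈ C := fun x hx => (hDfin.mem_toFinset.mp hx).1
  by_cases hBe : ∃ w, w ∈ B
  · obtain ⟨w₀, hw₀⟩ := hBe
    refine ⟨insert w₀ DF, ?_, ?_, ?_⟩
    · intro x hx
      simp only [Finset.coe_insert, Set.mem_insert_iff] at hx
      rcases hx with rfl | hx
      · exact Or.inr hw₀.1
      · exact Or.inl (hDFC x hx)
    · calc (insert w₀ DF).card ≤ DF.card + 1 := Finset.card_insert_le _ _
        _ ≤ 4 := by omega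
    · intro u hu w hw hadj
      by_cases hwB : w ∈ B
      · exact Or.inr (Finset.mem_insert.mpr (Or.inl (hBsub w hwB w₀ hw₀)))
      · refine Or.inl (Finset.mem_insert.mpr (Or.inr ?_))
        exact hDfin.mem_toFinset.mpr ⟨hu, w, hw, hwB, hadj⟩
  · push_neg at hBe
    refine ⟨DF, ?_, le_trans hDF3 (by norm_num), ?_⟩
    · intro x hx
      exact Or.inl (hDFC x (by simpa using hx))
    · intro u hu w hw hadj
      exact Or.inl (hDfin.mem_toFinset.mpr ⟨hu, w, hw, hBe w, hadj⟩)
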